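/- For integers i ≥ 1 and j ≥ 0, the number of pairs (α, β) of polynomials over 𝔽_q with deg α = i, β of degree at most j (β = 0 allowed), and α and β coprime equals (q−1)²·q^{i+j}. Equivalently, for a uniformly random polynomial α of degree exactly i and a uniformly random polynomial β of degree at most j, the probability that α and β are coprime is 1 − 1/q. -/
import Mathlib

open Polynomial Finset

section CPAux

variable (F : Type) [Field F]

/-- pairs with exact degrees i and d, coprime -/
private def CP (i d : ℕ) : Type :=
  {p : F[X] × F[X] // p.1.degree = (i : ℕ) ∧ p.2.degree = (d : ℕ) ∧ IsCoprime p.1 p.2}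

/-- pairs with first exact degree i, second degree < n, coprime -/
private def CB (i n : ℕ) : Type :=
  {p : F[X] × F[X] // p.1.degree = (i : ℕ) ∧ p.2.degree < (n : ℕ) ∧ IsCoprime p.1 p.2}

variable {F}

private lemma isCoprime_of_isUnit_right {x y : F[X]} (hy : IsUnit y) : IsCoprime x y := by
  obtain ⟨u, rfl⟩ := hy
  exact ⟨0, ↑u⁻¹, by simp⟩

private lemma snd_ne_zero {i : ℕ} (hi : 1 ≤ i) {p : F[X] × F[X]}
    (h1 : p.1.degree = (i : ℕ)) (h3 : IsCoprime p.1 p.2) : p.2 ≠ 0 := by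
  intro h0
  rw [h0] at h3
  have := degree_eq_zero_of_isUnit (isCoprime_zero_right.mp h3)
  rw [h1] at this
  have hi0 : i = 0 := by exact_mod_cast this
  omega

variable [Fintype F]

private lemma finite_degree_lt (n : ℕ) : Finite {p : F[X] // p.degree < (n : ℕ)} := by
  have e : {p : F[X] // p.degree < (n : ℕ)} ≃ ↥(degreeLT F n) :=
    Equiv.subtypeEquivRight fun p => (mem_degreeLT).symm
  have : Finite ↥(degreeLT F n) := Finite.of_equiv _ (degreeLTEquiv F n).toEquiv.symm
  exact Finite.of_equiv _ e.symm

private instance finite_CP (i d : ℕ) : Finite (CP F i d) := by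
  have := finite_degree_lt (F := F) (i + 1)
  have := finite_degree_lt (F := F) (d + 1)
  apply Finite.of_injective (β := {p : F[X] // p.degree < ((i+1 : ℕ) : ℕ)} ×
    {p : F[X] // p.degree < ((d+1 : ℕ) : ℕ)})
    (fun x => (⟨x.1.1, by rw [x.2.1]; exact_mod_cast Nat.lt_succ_self i⟩,
               ⟨x.1.2, by rw [x.2.2.1]; exact_mod_cast Nat.lt_succ_self d⟩))
  rintro ⟨⟨a, b⟩, _⟩ ⟨⟨c, e⟩, _⟩ h
  simp only [Prod.mk.injEq, Subtype.mk.injEq] at h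
  exact Subtype.ext (Prod.ext h.1 h.2)

private instance finite_CB (i n : ℕ) : Finite (CB F i n) := by
  have := finite_degree_lt (F := F) (i + 1)
  have := finite_degree_lt (F := F) n
  apply Finite.of_injective (β := {p : F[X] // p.degree < ((i+1 : ℕ) : ℕ)} ×
    {p : F[X] // p.degree < (n : ℕ)})
    (fun x => (⟨x.1.1, by rw [x.2.1]; exact_mod_cast Nat.lt_succ_self i⟩, ⟨x.1.2, x.2.2.1⟩))
  rintro ⟨⟨a, b⟩, _⟩ ⟨⟨c, e⟩, _⟩ h
  simp only [Prod.mk.injEq, Subtype.mk.injEq] at h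
  exact Subtype.ext (Prod.ext h.1 h.2)

/-- number of polynomials of degree < n -/
private lemma card_degree_lt (n : ℕ) :
    Nat.card {p : F[X] // p.degree < (n : ℕ)} = Fintype.card F ^ n := by
  have e : {p : F[X] // p.degree < (n : ℕ)} ≃ ↥(degreeLT F n) :=
    Equiv.subtypeEquivRight fun p => (mem_degreeLT).symm
  rw [Nat.card_congr e, Nat.card_congr (degreeLTEquiv F n).toEquiv, Nat.card_eq_fintype_card]
  simp

private lemma card_ne_zero_aux : Nat.card {c : F // c ≠ 0} = Fintype.card F - 1 := by
  classical
  rw [Nat.card_congr (unitsEquivNeZero (G₀ := F)).symm, Nat.card_eq_fintype_card,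
    Fintype.card_units]

omit [Fintype F] in
private lemma coeff_top_ne {n : ℕ} {p : F[X]} (h : p.degree = (n : ℕ)) : p.coeff n ≠ 0 :=
  coeff_ne_zero_of_eq_degree h

private lemma degree_sub_top_lt {n : ℕ} {p : F[X]} (h : p.degree ≤ (n : ℕ)) :
    (p - C (p.coeff n) * X ^ n).degree < ((n : ℕ) : WithBot ℕ) := by
  rw [degree_lt_iff_coeff_zero]
  intro m hm
  rcases eq_or_lt_of_le hm with rfl | hlt
  · simp [coeff_sub, coeff_C_mul, coeff_X_pow]
  · rw [coeff_sub, coeff_C_mul, coeff_X_pow, if_neg (by omega), mul_zero, sub_zero]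
    exact coeff_eq_zero_of_degree_lt (lt_of_le_of_lt h (by exact_mod_cast hlt))

private lemma degree_add_top {n : ℕ} {r : F[X]} {c : F} (hr : r.degree < ((n : ℕ) : WithBot ℕ))
    (hc : c ≠ 0) : (r + C c * X ^ n).degree = ((n : ℕ) : WithBot ℕ) := by
  rw [degree_add_eq_right_of_degree_lt (by rwa [degree_C_mul_X_pow n hc]),
    degree_C_mul_X_pow n hc]

private lemma coeff_add_top {n : ℕ} {r : F[X]} {c : F} (hr : r.degree < ((n : ℕ) : WithBot ℕ)) :
    (r + C c * X ^ n).coeff n = c := by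
  rw [coeff_add, coeff_eq_zero_of_degree_lt hr, coeff_C_mul, coeff_X_pow, if_pos rfl,
    mul_one, zero_add]

/-- number of polynomials of degree exactly n -/
private lemma card_degree_eq (n : ℕ) :
    Nat.card {p : F[X] // p.degree = (n : ℕ)} =
      (Fintype.card F - 1) * Fintype.card F ^ n := by
  have e : {p : F[X] // p.degree = (n : ℕ)} ≃
      {c : F // c ≠ 0} × {p : F[X] // p.degree < (n : ℕ)} :=
    { toFun := fun x => (⟨x.1.coeff n, coeff_top_ne x.2⟩,
        ⟨x.1 - C (x.1.coeff n) * X ^ n, degree_sub_top_lt x.2.le⟩)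
      invFun := fun y => ⟨y.2.1 + C y.1.1 * X ^ n, degree_add_top y.2.2 y.1.2⟩
      left_inv := fun x => Subtype.ext (sub_add_cancel _ _)
      right_inv := fun y => by
        obtain ⟨⟨c, hc0⟩, ⟨r, hr⟩⟩ := y
        have hc : (r + C c * X ^ n).coeff n = c := coeff_add_top hr
        refine Prod.ext (Subtype.ext hc) (Subtype.ext ?_)
        show r + C c * X ^ n - C ((r + C c * X ^ n).coeff n) * X ^ n = r
        rw [hc]
        exact add_sub_cancel_right _ _ }
  rw [Nat.card_congr e, Nat.card_prod, card_ne_zero_aux, card_degree_lt]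

/-- partition of CB by exact degree of second component -/
private lemma card_CB_eq_sum (i n : ℕ) (hi : 1 ≤ i) :
    Nat.card (CB F i n) = ∑ d ∈ range n, Nat.card (CP F i d) := by
  have e : CB F i n ≃ (d : Fin n) × CP F i d :=
    { toFun := fun x => ⟨⟨x.1.2.natDegree, by
        have hne := snd_ne_zero hi x.2.1 x.2.2.2
        have h2 := x.2.2.1
        rw [degree_eq_natDegree hne] at h2
        exact_mod_cast h2⟩,
        ⟨x.1, x.2.1, (degree_eq_natDegree (snd_ne_zero hi x.2.1 x.2.2.2)), x.2.2.2⟩⟩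
      invFun := fun y => ⟨y.2.1, y.2.2.1, by rw [y.2.2.2.1]; exact_mod_cast y.1.2, y.2.2.2.2⟩
      left_inv := fun x => rfl
      right_inv := fun y => by
        obtain ⟨⟨d, hd⟩, ⟨p, h1, h2, h3⟩⟩ := y
        have hnd : p.2.natDegree = d := natDegree_eq_of_degree_eq_some h2
        subst hnd
        rfl }
  classical
  haveI : ∀ d : ℕ, Fintype (CP F i d) := fun d => Fintype.ofFinite _
  rw [Nat.card_congr e, Nat.card_eq_fintype_card, Fintype.card_sigma,
    ← Fin.sum_univ_eq_sum_range (fun d => Nat.card (CP F i d)) n]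
  simp [Nat.card_eq_fintype_card]

private lemma card_CP_swap (i d : ℕ) : Nat.card (CP F i d) = Nat.card (CP F d i) := by
  refine Nat.card_congr ⟨fun x => ⟨x.1.swap, x.2.2.1, x.2.1, x.2.2.2.symm⟩,
    fun x => ⟨x.1.swap, x.2.2.1, x.2.1, x.2.2.2.symm⟩, fun x => rfl, fun x => rfl⟩

private lemma card_CP_zero (i : ℕ) :
    Nat.card (CP F i 0) =
      ((Fintype.card F - 1) * Fintype.card F ^ i) * (Fintype.card F - 1) := by
  have e : CP F i 0 ≃ {p : F[X] // p.degree = ((i : ℕ) : WithBot ℕ)} × {c : F // c ≠ 0} :=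
    { toFun := fun x => (⟨x.1.1, x.2.1⟩, ⟨x.1.2.coeff 0, coeff_top_ne x.2.2.1⟩)
      invFun := fun y => ⟨(y.1.1, C y.2.1),
        y.1.2, by simp [degree_C y.2.2],
        isCoprime_of_isUnit_right (isUnit_C.mpr (isUnit_iff_ne_zero.mpr y.2.2))⟩
      left_inv := fun x => Subtype.ext (Prod.ext rfl
        (eq_C_of_degree_le_zero (by rw [x.2.2.1]; simp)).symm)
      right_inv := fun y => Prod.ext (Subtype.ext rfl) (Subtype.ext coeff_C_zero) }
  rw [Nat.card_congr e, Nat.card_prod, card_degree_eq, card_ne_zero_aux]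

omit [Fintype F] in
private lemma ne_zero_of_degree_nat {n : ℕ} {p : F[X]} (h : p.degree = ((n : ℕ) : WithBot ℕ)) :
    p ≠ 0 := fun h0 => by simp [h0] at h

omit [Fintype F] in
/-- uniqueness of division with remainder -/
private lemma div_unique {r s s' t t' : F[X]} (ht : t.degree < r.degree)
    (ht' : t'.degree < r.degree) (h : r * s + t = r * s' + t') : s = s' ∧ t = t' := by
  by_cases hss : s = s'
  · subst hss
    exact ⟨rfl, by linear_combination h⟩
  · exfalso
    have hsub : r * (s - s') = t' - t := by linear_combination h
    have h1 : r.degree ≤ (r * (s - s')).degree := by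
      rw [degree_mul]
      exact le_add_of_nonneg_right (zero_le_degree_iff.mpr (sub_ne_zero.mpr hss))
    have h2 : (t' - t).degree < r.degree := lt_of_le_of_lt (degree_sub_le _ _) (max_lt ht' ht)
    rw [hsub] at h1
    exact absurd (lt_of_le_of_lt h1 h2) (lt_irrefl _)

/-- Euclid step: d < i -/
private lemma card_CP_of_lt {i d : ℕ} (hd : 1 ≤ d) (hdi : d < i) :
    Nat.card (CP F i d) =
      ((Fintype.card F - 1) * Fintype.card F ^ (i - d)) * Nat.card (CB F d d) := by
  have hcast : ((d : ℕ) : WithBot ℕ) + ((i - d : ℕ) : WithBot ℕ) = ((i : ℕ) : WithBot ℕ) := by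
    rw [← Nat.cast_add]
    congr 1
    omega
  set g : {s : F[X] // s.degree = ((i - d : ℕ) : WithBot ℕ)} × CB F d d → CP F i d :=
    fun x => ⟨(x.2.1.1 * x.1.1 + x.2.1.2, x.2.1.1), by
      have h1 := x.2.2.1
      have h2 := x.2.2.2.1
      have h3 := x.2.2.2.2
      have hrs : (x.2.1.1 * x.1.1).degree = ((i : ℕ) : WithBot ℕ) := by
        rw [degree_mul, h1, x.1.2, hcast]
      refine ⟨?_, h1, ?_⟩
      · rw [degree_add_eq_left_of_degree_lt, hrs]
        rw [hrs]
        exact lt_of_lt_of_le h2 (by exact_mod_cast Nat.cast_le.mpr hdi.le)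
      · have h4 : IsCoprime x.2.1.1 (x.2.1.2 + x.2.1.1 * x.1.1) := h3.add_mul_left_right _
        rw [add_comm] at h4
        exact h4.symm⟩ with hg
  have hbij : Function.Bijective g := by
    constructor
    · rintro ⟨⟨s, hs⟩, ⟨⟨r, t⟩, h1, h2, h3⟩⟩ ⟨⟨s', hs'⟩, ⟨⟨r', t'⟩, h1', h2', h3'⟩⟩ heq
      have heq1 : r * s + t = r' * s' + t' := congrArg (fun z => z.1.1) heq
      have heqr : r = r' := congrArg (fun z => z.1.2) heq
      subst heqr
      obtain ⟨rfl, rfl⟩ := div_unique (by rw [h1]; exact h2) (by rw [h1]; exact h2') heq1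
      rfl
    · rintro ⟨⟨α, r⟩, hα, hr, hco⟩
      have hr0 : r ≠ 0 := ne_zero_of_degree_nat hr
      set s : F[X] := α / r with hsdef
      set t : F[X] := α % r with htdef
      have hdm : r * s + t = α := EuclideanDomain.div_add_mod α r
      have ht : t.degree < r.degree := EuclideanDomain.mod_lt α hr0
      have htd : t.degree < ((d : ℕ) : WithBot ℕ) := by rwa [hr] at ht
      have hrs : (r * s).degree = ((i : ℕ) : WithBot ℕ) := by
        have hsub : α - t = r * s := by linear_combination -hdm
        rw [← hsub, degree_sub_eq_left_of_degree_lt, hα]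
        rw [hα]
        exact lt_trans htd (by exact_mod_cast Nat.cast_lt.mpr hdi)
      have hs0 : s ≠ 0 := by
        intro h0
        rw [h0, mul_zero, degree_zero] at hrs
        exact absurd hrs (by simp)
      have hsd : s.degree = ((i - d : ℕ) : WithBot ℕ) := by
        rw [degree_mul, hr, degree_eq_natDegree hs0] at hrs
        rw [degree_eq_natDegree hs0]
        have : d + s.natDegree = i := by exact_mod_cast hrs
        congr 1
        omega
      have hco' : IsCoprime r t := by
        have hco2 : IsCoprime r (r * s + t) := by rw [hdm]; exact hco.symm
        have h5 := hco2.add_mul_left_right (-s)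
        have h6 : r * s + t + r * (-s) = t := by ring
        rwa [h6] at h5
      exact ⟨⟨⟨s, hsd⟩, ⟨(r, t), hr, htd, hco'⟩⟩, Subtype.ext (Prod.ext hdm rfl)⟩
  rw [← Nat.card_congr (Equiv.ofBijective g hbij), Nat.card_prod, card_degree_eq]

/-- equal degrees -/
private lemma card_CP_diag {i : ℕ} (hi : 1 ≤ i) :
    Nat.card (CP F i i) = (Fintype.card F - 1) * Nat.card (CB F i i) := by
  set g : {c : F // c ≠ 0} × CB F i i → CP F i i :=
    fun x => ⟨(x.2.1.1, x.2.1.2 + C x.1.1 * x.2.1.1), by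
      have h1 := x.2.2.1
      have h2 := x.2.2.2.1
      have h3 := x.2.2.2.2
      have hcα : (C x.1.1 * x.2.1.1).degree = ((i : ℕ) : WithBot ℕ) := by
        rw [degree_mul, degree_C x.1.2, h1, zero_add]
      refine ⟨h1, ?_, ?_⟩
      · rw [degree_add_eq_right_of_degree_lt (by rw [hcα]; exact h2), hcα]
      · have h4 : IsCoprime x.2.1.1 (x.2.1.2 + x.2.1.1 * C x.1.1) := h3.add_mul_left_right _
        rwa [mul_comm x.2.1.1 (C x.1.1)] at h4⟩ with hg
  have hbij : Function.Bijective g := by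
    constructor
    · rintro ⟨⟨c, hc⟩, ⟨⟨α, t⟩, h1, h2, h3⟩⟩ ⟨⟨c', hc'⟩, ⟨⟨α', t'⟩, h1', h2', h3'⟩⟩ heq
      have heqa : α = α' := congrArg (fun z => z.1.1) heq
      have heq2 : t + C c * α = t' + C c' * α' := congrArg (fun z => z.1.2) heq
      subst heqa
      have heq3 : α * C c + t = α * C c' + t' := by linear_combination heq2
      obtain ⟨hcc, rfl⟩ := div_unique (by rw [h1]; exact h2) (by rw [h1]; exact h2') heq3
      have : c = c' := by
        have := congrArg (fun p => Polynomial.coeff p 0) hcc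
        simpa using this
      subst this
      rfl
    · rintro ⟨⟨α, β⟩, hα, hβ, hco⟩
      have hα0 : α.coeff i ≠ 0 := coeff_top_ne hα
      set c : F := β.coeff i / α.coeff i with hcdef
      have hc0 : c ≠ 0 := div_ne_zero (coeff_top_ne hβ) hα0
      set t : F[X] := β - C c * α with htdef
      have htd : t.degree < ((i : ℕ) : WithBot ℕ) := by
        rw [degree_lt_iff_coeff_zero]
        intro m hm
        rcases eq_or_lt_of_le hm with rfl | hlt
        · simp only [htdef, coeff_sub, coeff_C_mul, hcdef]
          rw [div_mul_cancel₀ _ hα0, sub_self]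
        · have hm1 : β.coeff m = 0 := coeff_eq_zero_of_degree_lt (by rw [hβ]; exact_mod_cast hlt)
          have hm2 : α.coeff m = 0 := coeff_eq_zero_of_degree_lt (by rw [hα]; exact_mod_cast hlt)
          simp [htdef, coeff_sub, coeff_C_mul, hm1, hm2]
      have hco' : IsCoprime α t := by
        have h5 := hco.add_mul_left_right (-C c)
        have h6 : β + α * (-C c) = t := by rw [htdef]; ring
        rwa [h6] at h5
      refine ⟨⟨⟨c, hc0⟩, ⟨(α, t), hα, htd, hco'⟩⟩, Subtype.ext (Prod.ext rfl ?_)⟩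
      show t + C c * α = β
      rw [htdef]; ring
  rw [← Nat.card_congr (Equiv.ofBijective g hbij), Nat.card_prod, card_ne_zero_aux]

omit [Fintype F] in
private lemma deg_le_iff_lt_succ {j : ℕ} {p : F[X]} :
    p.degree ≤ ((j : ℕ) : WithBot ℕ) ↔ p.degree < (((j + 1 : ℕ)) : WithBot ℕ) := by
  rw [degree_le_iff_coeff_zero, degree_lt_iff_coeff_zero]
  constructor
  · intro h m hm
    exact h m (by exact_mod_cast (by omega : j < m))
  · intro h m hm
    have : j < m := by exact_mod_cast hm
    exact h m (by omega)

private lemma card_CB_gen {i n : ℕ} (hi : 1 ≤ i) (hn : 1 ≤ n)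
    (H : ∀ d', 1 ≤ d' → d' < n → Nat.card (CP F i d') =
      (Fintype.card F - 1) ^ 3 * Fintype.card F ^ (i + d' - 1)) :
    Nat.card (CB F i n) = (Fintype.card F - 1) ^ 2 * Fintype.card F ^ (i + n - 1) := by
  obtain ⟨n', rfl⟩ : ∃ n', n = n' + 1 := ⟨n - 1, by omega⟩
  have h1q : 1 ≤ Fintype.card F := Fintype.card_pos
  rw [card_CB_eq_sum i (n' + 1) hi, Finset.sum_range_succ', card_CP_zero]
  have hterm : ∀ d ∈ range n', Nat.card (CP F i (d + 1)) =
      ((Fintype.card F - 1) ^ 3 * Fintype.card F ^ i) * Fintype.card F ^ d := by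
    intro d hd
    rw [H (d + 1) (by omega) (by simp at hd; omega)]
    have he2 : i + (d + 1) - 1 = i + d := by omega
    rw [he2, pow_add]
    ring
  rw [Finset.sum_congr rfl hterm, ← Finset.mul_sum]
  have he : i + (n' + 1) - 1 = i + n' := by omega
  rw [he]
  have hG := geom_sum_mul (Fintype.card F : ℤ) n'
  zify [h1q]
  push_cast
  linear_combination ((Fintype.card F : ℤ) - 1) ^ 2 * (Fintype.card F : ℤ) ^ i * hG

private lemma card_CP_eq : ∀ k i d : ℕ, i + d = k → 1 ≤ i → 1 ≤ d →
    Nat.card (CP F i d) = (Fintype.card F - 1) ^ 3 * Fintype.card F ^ (i + d - 1) := by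
  intro k
  induction k using Nat.strong_induction_on with
  | _ k IH =>
    intro i d hk hi hd
    rcases lt_trichotomy d i with hlt | rfl | hgt
    · rw [card_CP_of_lt hd hlt,
        card_CB_gen hd hd (fun d' h1 h2 => IH (d + d') (by omega) d d' rfl hd h1)]
      have hexp : i + d - 1 = (i - d) + (d + d - 1) := by omega
      rw [hexp, pow_add]
      ring
    · rw [card_CP_diag hi,
        card_CB_gen hi hi (fun d' h1 h2 => IH (d + d') (by omega) d d' rfl hi h1)]
      ring
    · rw [card_CP_swap, card_CP_of_lt hi hgt,
        card_CB_gen hi hi (fun d' h1 h2 => IH (i + d') (by omega) i d' rfl hi h1)]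
      have hexp : i + d - 1 = (d - i) + (i + i - 1) := by omega
      rw [hexp, pow_add]
      ring

end CPAux

/-- For integers `i ≥ 1` and `j ≥ 0`, the number of pairs `(α, β)` of polynomials over `𝔽_q`
with `deg α = i` exactly, `deg β ≤ j` (the zero polynomial allowed), and `α`, `β` coprime
equals `(q−1)² · q^(i+j)`. -/
theorem coprime_pairs_count_exact_and_bounded_degree
    (F : Type) [Field F] [Fintype F] (q : ℕ) (hq : Fintype.card F = q)
    (i j : ℕ) (hi : 1 ≤ i) :
    Nat.card {p : F[X] × F[X] //
      p.1.degree = (i : ℕ) ∧ p.2.degree ≤ (j : ℕ) ∧ IsCoprime p.1 p.2} =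
      (q - 1) ^ 2 * q ^ (i + j) := by
  subst hq
  have e : {p : F[X] × F[X] //
      p.1.degree = (i : ℕ) ∧ p.2.degree ≤ (j : ℕ) ∧ IsCoprime p.1 p.2} ≃ CB F i (j + 1) :=
    Equiv.subtypeEquivRight (fun p =>
      ⟨fun h => ⟨h.1, deg_le_iff_lt_succ.mp h.2.1, h.2.2⟩,
       fun h => ⟨h.1, deg_le_iff_lt_succ.mpr h.2.1, h.2.2⟩⟩)
  rw [Nat.card_congr e,
    card_CB_gen hi (by omega) (fun d' h1 h2 => card_CP_eq (i + d') i d' rfl hi h1)]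
  have hexp : i + (j + 1) - 1 = i + j := by omega
  rw [hexp]
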